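/- arXiv:1203.2901 — 3 statements merged into one kernel-verified Lean document; each statement's English description precedes it below -/
import Mathlib

section
/- Let N and n be natural numbers with 1 ≤ n ≤ N, and let A : ℝ → Matrix (Fin N) (Fin N) ℝ be a matrix-valued function each of whose entries is infinitely differentiable. Let ε₀ ∈ ℝ, and write v_i(ε) for the i-th column of A(ε). Suppose v_i(ε₀) = 0 for all i = 1, …, n. Then the function φ(ε) = det A(ε) satisfies φ^{(k)}(ε₀) = 0 for every 0 ≤ k < n, and φ^{(n)}(ε₀) = n! · det B, where B is the N × N matrix whose i-th column is v_i′(ε₀) (the entrywise derivative at ε₀) for 1 ≤ i ≤ n, and v_i(ε₀) for n < i ≤ N. -/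
open Finset

private theorem choose_key (m : ℕ) (u v : ℕ → ℝ) :
    ∑ k ∈ range (m+1), ((m.choose k : ℝ) * u (k+1) * v (m-k) + (m.choose k : ℝ) * u k * v (m-k+1))
      = ∑ k ∈ range (m+2), ((m+1).choose k : ℝ) * u k * v (m+1-k) := by
  rw [Finset.sum_add_distrib]
  rw [Finset.sum_range_succ' (fun k => ((m+1).choose k : ℝ) * u k * v (m+1-k)) (m+1)]
  have h1 : ∀ k ∈ range (m+1),
      ((m+1).choose (k+1) : ℝ) * u (k+1) * v (m+1-(k+1))
        = (m.choose k : ℝ) * u (k+1) * v (m-k) + (m.choose (k+1) : ℝ) * u (k+1) * v (m-k) := by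
    intro k hk
    rw [Nat.choose_succ_succ]
    push_cast [Nat.succ_eq_add_one]
    ring
  rw [Finset.sum_congr rfl h1, Finset.sum_add_distrib]
  have h2 : ∑ k ∈ range (m+1), (m.choose k : ℝ) * u k * v (m-k+1)
      = ∑ k ∈ range (m+1), (m.choose (k+1) : ℝ) * u (k+1) * v (m-k)
        + ((m+1).choose 0 : ℝ) * u 0 * v (m+1-0) := by
    rw [Finset.sum_range_succ' (fun k => (m.choose k : ℝ) * u k * v (m-k+1)) m]
    rw [Finset.sum_range_succ (fun k => (m.choose (k+1) : ℝ) * u (k+1) * v (m-k)) m]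
    simp only [Nat.choose_succ_self, Nat.cast_zero, zero_mul, add_zero, Nat.choose_zero_right,
      Nat.cast_one, one_mul, Nat.sub_zero]
    congr 1
    refine Finset.sum_congr rfl fun k hk => ?_
    rw [Finset.mem_range] at hk
    rw [show m - (k+1) + 1 = m - k from by omega]
  rw [h2]
  ring

private theorem iterDeriv_mul {f g : ℝ → ℝ} (hf : ContDiff ℝ (⊤ : ℕ∞) f) (hg : ContDiff ℝ (⊤ : ℕ∞) g) :
    ∀ (m : ℕ) (x : ℝ), iteratedDeriv m (fun y => f y * g y) x =
      ∑ k ∈ range (m + 1), (m.choose k : ℝ) * iteratedDeriv k f x * iteratedDeriv (m - k) g x := by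
  have hdf : ∀ k, Differentiable ℝ (iteratedDeriv k f) := fun k =>
    hf.differentiable_iteratedDeriv k (by exact_mod_cast ENat.coe_lt_top k)
  have hdg : ∀ k, Differentiable ℝ (iteratedDeriv k g) := fun k =>
    hg.differentiable_iteratedDeriv k (by exact_mod_cast ENat.coe_lt_top k)
  intro m
  induction m with
  | zero => intro x; simp
  | succ m ih =>
    intro x
    have hmain : iteratedDeriv m (fun y => f y * g y) =
        fun y => ∑ k ∈ range (m+1),
          (m.choose k : ℝ) * iteratedDeriv k f y * iteratedDeriv (m-k) g y := funext ih
    rw [iteratedDeriv_succ, hmain]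
    rw [deriv_fun_sum (A := fun k y => (m.choose k : ℝ) * iteratedDeriv k f y * iteratedDeriv (m-k) g y) (fun k _ => (((hdf k x).const_mul ((m.choose k : ℝ))).mul (hdg (m-k) x)))]
    have hterm : ∀ k ∈ range (m+1),
        deriv (fun y => (m.choose k : ℝ) * iteratedDeriv k f y * iteratedDeriv (m-k) g y) x
          = (m.choose k : ℝ) * iteratedDeriv (k+1) f x * iteratedDeriv (m-k) g x
            + (m.choose k : ℝ) * iteratedDeriv k f x * iteratedDeriv (m-k+1) g x := by
      intro k _
      rw [deriv_fun_mul ((hdf k x).const_mul _) (hdg (m-k) x), deriv_const_mul _ (hdf k x)]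
      rw [← iteratedDeriv_succ, ← iteratedDeriv_succ]
    rw [Finset.sum_congr rfl hterm, choose_key m (fun k => iteratedDeriv k f x)
      (fun k => iteratedDeriv k g x)]

private theorem prod_vanish {ι : Type*} [DecidableEq ι] (ε₀ : ℝ) (f : ι → ℝ → ℝ)
    (hf : ∀ j, ContDiff ℝ (⊤ : ℕ∞) (f j)) :
    ∀ s t : Finset ι, s ⊆ t → (∀ j ∈ s, f j ε₀ = 0) →
      (∀ k < s.card, iteratedDeriv k (fun ε => ∏ j ∈ t, f j ε) ε₀ = 0) ∧
      iteratedDeriv s.card (fun ε => ∏ j ∈ t, f j ε) ε₀ =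
        (s.card.factorial : ℝ) * ((∏ j ∈ s, deriv (f j) ε₀) * ∏ j ∈ t \ s, f j ε₀) := by
  intro s
  induction s using Finset.induction_on with
  | empty =>
    intro t _ _
    exact ⟨fun k hk => absurd hk (by simp), by simp⟩
  | @insert a s ha ih =>
    intro t hsub hzero
    have hat : a ∈ t := hsub (Finset.mem_insert_self a s)
    have hs' : s ⊆ t.erase a := fun x hx =>
      Finset.mem_erase.2 ⟨fun h => ha (h ▸ hx), hsub (Finset.mem_insert_of_mem hx)⟩
    have hz' : ∀ j ∈ s, f j ε₀ = 0 := fun j hj => hzero j (Finset.mem_insert_of_mem hj)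
    obtain ⟨IH0, IH1⟩ := ih (t.erase a) hs' hz'
    have hfa0 : f a ε₀ = 0 := hzero a (Finset.mem_insert_self a s)
    set m := s.card with hm
    have hcard : (insert a s).card = m + 1 := Finset.card_insert_of_notMem ha
    have hsplit : (fun ε => ∏ j ∈ t, f j ε) =
        fun ε => f a ε * ∏ j ∈ t.erase a, f j ε := by
      funext ε; rw [Finset.mul_prod_erase t (fun j => f j ε) hat]
    have hprod : ContDiff ℝ (⊤ : ℕ∞) (fun ε => ∏ j ∈ t.erase a, f j ε) :=
      contDiff_prod fun j _ => hf j
    have hL := iterDeriv_mul (hf a) hprod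
    have hvan : ∀ k < m + 1, iteratedDeriv k (fun ε => ∏ j ∈ t, f j ε) ε₀ = 0 := by
      intro k hk
      rw [hsplit, hL k ε₀]
      refine Finset.sum_eq_zero fun j hj => ?_
      rcases Nat.eq_zero_or_pos j with hj0 | hj0
      · subst hj0; simp [hfa0]
      · have : k - j < m := by rw [Finset.mem_range] at hj; omega
        rw [IH0 _ this]; ring
    refine ⟨hcard ▸ hvan, ?_⟩
    rw [hcard, hsplit, hL (m+1) ε₀]
    rw [Finset.sum_eq_single 1 ?side1 ?side2]
    · rw [iteratedDeriv_one, Nat.add_sub_cancel, IH1]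
      have hsd : t.erase a \ s = t \ insert a s := by
        ext x
        simp only [Finset.mem_sdiff, Finset.mem_erase, Finset.mem_insert]
        tauto
      rw [hsd, Finset.prod_insert ha, Nat.choose_one_right, Nat.factorial_succ]
      push_cast
      ring
    · intro j hj hj1
      rcases Nat.eq_zero_or_pos j with hj0 | hj0
      · subst hj0; simp [hfa0]
      · have : m + 1 - j < m := by
          rw [Finset.mem_range] at hj
          omega
        rw [IH0 _ this]; ring
    · intro h
      exact absurd (Finset.mem_range.2 (by omega)) h

private theorem iterDeriv_fsum {ι : Type*} (u : Finset ι) (f : ι → ℝ → ℝ)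
    (hf : ∀ j ∈ u, ContDiff ℝ (⊤ : ℕ∞) (f j)) (k : ℕ) (x : ℝ) :
    iteratedDeriv k (fun y => ∑ j ∈ u, f j y) x = ∑ j ∈ u, iteratedDeriv k (f j) x := by
  have h := iteratedFDeriv_sum (𝕜 := ℝ) (f := f) (u := u) (i := k)
    (fun j hj => (hf j hj).of_le (by exact_mod_cast le_top))
  simp only [iteratedDeriv_eq_iteratedFDeriv]
  rw [show (fun y => ∑ j ∈ u, f j y) = (∑ j ∈ u, f j ·) from rfl, h]
  simp

private theorem iterDeriv_cmul {f : ℝ → ℝ} (hf : ContDiff ℝ (⊤ : ℕ∞) f) (c : ℝ) (k : ℕ) (x : ℝ) :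
    iteratedDeriv k (fun y => c * f y) x = c * iteratedDeriv k f x := by
  rw [← iteratedDerivWithin_univ, ← iteratedDerivWithin_univ,
    iteratedDerivWithin_const_mul (Set.mem_univ x) uniqueDiffOn_univ c
      ((hf.of_le (by exact_mod_cast le_top)).contDiffWithinAt)]

/-- Let 1 ≤ n ≤ N and let A : ℝ → Matrix (Fin N) (Fin N) ℝ have C^∞ entries.
If the first n columns of A(ε₀) vanish, then φ = det ∘ A satisfies φ^{(k)}(ε₀) = 0 for
0 ≤ k < n, and φ^{(n)}(ε₀) = n! · det B, where B has i-th column v_i′(ε₀) for i ≤ n and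
v_i(ε₀) for i > n. -/
theorem det_derivative_vanishing_columns (N n : ℕ) (hn : 1 ≤ n) (hnN : n ≤ N)
    (A : ℝ → Matrix (Fin N) (Fin N) ℝ)
    (hA : ∀ i j : Fin N, ContDiff ℝ (⊤ : ℕ∞) fun ε => A ε i j)
    (ε₀ : ℝ)
    (hcol : ∀ i : Fin N, (i : ℕ) < n → ∀ j : Fin N, A ε₀ j i = 0) :
    (∀ k : ℕ, k < n → iteratedDeriv k (fun ε => (A ε).det) ε₀ = 0) ∧
    iteratedDeriv n (fun ε => (A ε).det) ε₀ =
      (n.factorial : ℝ) *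
        (Matrix.of fun j i : Fin N =>
          if (i : ℕ) < n then deriv (fun ε => A ε j i) ε₀ else A ε₀ j i).det := by
  classical
  set P : Equiv.Perm (Fin N) → ℝ → ℝ := fun σ ε => ∏ j, A ε (σ j) j with hP
  have hPsmooth : ∀ σ, ContDiff ℝ (⊤ : ℕ∞) (P σ) := fun σ =>
    contDiff_prod fun j _ => hA (σ j) j
  set c : Equiv.Perm (Fin N) → ℝ := fun σ => ((Equiv.Perm.sign σ : ℤ) : ℝ) with hc
  have hdet : (fun ε => (A ε).det) = fun ε => ∑ σ ∈ Finset.univ, c σ * P σ ε := by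
    funext ε; exact Matrix.det_apply' (A ε)
  set s : Finset (Fin N) := Finset.univ.filter (fun j : Fin N => (j : ℕ) < n) with hs
  have hscard : s.card = n := by
    rw [show s = Finset.map ⟨Fin.castLE hnN, Fin.castLE_injective hnN⟩ Finset.univ from ?_]
    · simp
    · ext j
      simp only [hs, Finset.mem_filter, Finset.mem_univ, true_and, Finset.mem_map,
        Function.Embedding.coeFn_mk]
      constructor
      · intro hj; exact ⟨⟨j, hj⟩, rfl⟩
      · rintro ⟨i, rfl⟩; exact i.2
  have hPV : ∀ σ : Equiv.Perm (Fin N),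
      (∀ k < n, iteratedDeriv k (P σ) ε₀ = 0) ∧
      iteratedDeriv n (P σ) ε₀ =
        (n.factorial : ℝ) * ((∏ j ∈ s, deriv (fun ε => A ε (σ j) j) ε₀) *
          ∏ j ∈ Finset.univ \ s, A ε₀ (σ j) j) := by
    intro σ
    have := prod_vanish ε₀ (fun j ε => A ε (σ j) j) (fun j => hA (σ j) j) s Finset.univ
      (Finset.subset_univ s) (fun j hj => hcol j (by simpa [hs] using hj) (σ j))
    rw [hscard] at this
    exact this
  have hsmul : ∀ σ, ContDiff ℝ (⊤ : ℕ∞) (fun ε => c σ * P σ ε) := fun σ =>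
    (contDiff_const).mul (hPsmooth σ)
  have hiter : ∀ k : ℕ, iteratedDeriv k (fun ε => (A ε).det) ε₀
      = ∑ σ ∈ Finset.univ, c σ * iteratedDeriv k (P σ) ε₀ := by
    intro k
    rw [hdet, iterDeriv_fsum Finset.univ _ (fun σ _ => hsmul σ) k ε₀]
    exact Finset.sum_congr rfl fun σ _ => iterDeriv_cmul (hPsmooth σ) (c σ) k ε₀
  constructor
  · intro k hk
    rw [hiter k]
    exact Finset.sum_eq_zero fun σ _ => by rw [(hPV σ).1 k hk, mul_zero]
  · rw [hiter n]
    rw [Matrix.det_apply']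
    rw [Finset.mul_sum]
    refine Finset.sum_congr rfl fun σ _ => ?_
    rw [(hPV σ).2]
    have hprod : ∏ i, (Matrix.of fun j i : Fin N =>
          if (i : ℕ) < n then deriv (fun ε => A ε j i) ε₀ else A ε₀ j i) (σ i) i
        = (∏ j ∈ s, deriv (fun ε => A ε (σ j) j) ε₀) * ∏ j ∈ Finset.univ \ s, A ε₀ (σ j) j := by
      rw [← Finset.prod_filter_mul_prod_filter_not Finset.univ (fun j : Fin N => (j : ℕ) < n)]
      congr 1
      · refine Finset.prod_congr rfl fun j hj => ?_
        rw [Finset.mem_filter] at hj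
        simp [Matrix.of_apply, if_pos hj.2]
      · rw [show Finset.univ \ s = Finset.univ.filter (fun j : Fin N => ¬ (j : ℕ) < n) by
          simp [hs, Finset.sdiff_eq_filter]]
        refine Finset.prod_congr rfl fun j hj => ?_
        rw [Finset.mem_filter] at hj
        simp [Matrix.of_apply, if_neg hj.2]
    rw [hprod]
    ring
end

section
/- Let Φ : ℝⁿ → ℝⁿ be real analytic and ℤⁿ-periodic, i.e. Φ(x + k) = Φ(x) for all x ∈ ℝⁿ and k ∈ ℤⁿ. Let F = {x ∈ ℝⁿ : det(DΦ(x)) = 0} be the critical set, where DΦ(x) is the Jacobian matrix of Φ at x. Assume there exists x₀ with det(DΦ(x₀)) ≠ 0. Then the set {x ∈ ℝⁿ : Φ(x) ∉ Φ(F)} is open and dense in ℝⁿ. -/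
open Set MeasureTheory

noncomputable section

lemma det_analytic' (n : ℕ) :
    AnalyticOnNhd ℝ (fun f : (EuclideanSpace ℝ (Fin n)) →L[ℝ] (EuclideanSpace ℝ (Fin n)) =>
      LinearMap.det (f.toLinearMap)) Set.univ := by
  classical
  let b : Module.Basis (Fin n) ℝ (EuclideanSpace ℝ (Fin n)) := (EuclideanSpace.basisFun (Fin n) ℝ).toBasis
  have hdet : ∀ f : EuclideanSpace ℝ (Fin n) →L[ℝ] EuclideanSpace ℝ (Fin n),
      LinearMap.det f.toLinearMap =
      ∑ σ : Equiv.Perm (Fin n), ((Equiv.Perm.sign σ : ℤ) : ℝ) * ∏ i, b.repr (f (b i)) (σ i) := by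
    intro f
    rw [← LinearMap.det_toMatrix b f.toLinearMap, Matrix.det_apply]
    simp [LinearMap.toMatrix_apply, Units.smul_def, zsmul_eq_mul]
  have heq : (fun f : EuclideanSpace ℝ (Fin n) →L[ℝ] EuclideanSpace ℝ (Fin n) =>
        LinearMap.det f.toLinearMap) =
      (fun f => ∑ σ : Equiv.Perm (Fin n),
        ((Equiv.Perm.sign σ : ℤ) : ℝ) * ∏ i, b.repr (f (b i)) (σ i)) := funext hdet
  rw [heq]
  apply Finset.analyticOnNhd_fun_sum
  intro σ _
  apply AnalyticOnNhd.mul analyticOnNhd_const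
  apply Finset.analyticOnNhd_fun_prod
  intro i _
  exact ((LinearMap.toContinuousLinearMap (b.coord (σ i))).comp
      (ContinuousLinearMap.apply ℝ (EuclideanSpace ℝ (Fin n)) (b i))).analyticOnNhd Set.univ

lemma fderiv_translate' {E : Type*} [NormedAddCommGroup E] [NormedSpace ℝ E]
    {F : Type*} [NormedAddCommGroup F] [NormedSpace ℝ F]
    {Φ : E → F} (hd : Differentiable ℝ Φ) (c : E) (hc : ∀ y, Φ (y + c) = Φ y) (x : E) :
    fderiv ℝ Φ (x + c) = fderiv ℝ Φ x := by
  have h1 : HasFDerivAt Φ (fderiv ℝ Φ (x + c)) (x + c) := (hd (x + c)).hasFDerivAt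
  have h2 : HasFDerivAt (fun y => Φ (y + c)) (fderiv ℝ Φ (x + c)) x := by
    have := h1.comp x ((hasFDerivAt_id x).add_const c)
    simpa [Function.comp_def] using this
  have h3 : HasFDerivAt Φ (fderiv ℝ Φ (x + c)) x := by
    have heq : (fun y => Φ (y + c)) = Φ := funext hc
    rwa [heq] at h2
  exact h3.fderiv.symm

/-- Let Φ : ℝⁿ → ℝⁿ be real analytic and ℤⁿ-periodic, let
F = {x : det(DΦ(x)) = 0} be the critical set, and assume det(DΦ(x₀)) ≠ 0 for some x₀.
Then {x : Φ(x) ∉ Φ(F)} is open and dense in ℝⁿ. -/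
theorem regular_values_open_dense (n : ℕ)
    (Φ : EuclideanSpace ℝ (Fin n) → EuclideanSpace ℝ (Fin n))
    (hΦ : AnalyticOnNhd ℝ Φ Set.univ)
    (hper : ∀ x : EuclideanSpace ℝ (Fin n), ∀ k : Fin n → ℤ,
      Φ (x + (show EuclideanSpace ℝ (Fin n) from WithLp.toLp 2 (fun i => (k i : ℝ)))) = Φ x)
    (F : Set (EuclideanSpace ℝ (Fin n)))
    (hF : F = {x | LinearMap.det (fderiv ℝ Φ x).toLinearMap = 0})
    (x₀ : EuclideanSpace ℝ (Fin n))
    (hx₀ : LinearMap.det (fderiv ℝ Φ x₀).toLinearMap ≠ 0) :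
    IsOpen {x | Φ x ∉ Φ '' F} ∧ Dense {x | Φ x ∉ Φ '' F} := by
  classical
  set g : EuclideanSpace ℝ (Fin n) → ℝ :=
    fun x => LinearMap.det (fderiv ℝ Φ x).toLinearMap with hgdef
  have hdiff : Differentiable ℝ Φ := fun x => (hΦ x (mem_univ x)).differentiableAt
  have hΦcont : Continuous Φ := hdiff.continuous
  have hfd : AnalyticOnNhd ℝ (fderiv ℝ Φ) univ := hΦ.fderiv
  have hg : AnalyticOnNhd ℝ g univ :=
    (det_analytic' n).comp hfd (mapsTo_univ _ _)
  have hgcont : Continuous g := by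
    rw [← continuousOn_univ]
    exact hg.continuousOn
  have hFclosed : IsClosed F := by
    rw [hF]
    exact isClosed_eq hgcont continuous_const
  have hgper : ∀ (x : EuclideanSpace ℝ (Fin n)) (k : Fin n → ℤ),
      g (x + (show EuclideanSpace ℝ (Fin n) from WithLp.toLp 2 (fun i => (k i : ℝ)))) = g x := by
    intro x k
    have := fderiv_translate' hdiff
      (show EuclideanSpace ℝ (Fin n) from WithLp.toLp 2 (fun i => (k i : ℝ))) (fun y => hper y k) x
    simp only [hgdef, this]
  set K : Set (EuclideanSpace ℝ (Fin n)) := (⇑(EuclideanSpace.equiv (Fin n) ℝ).symm) ''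
    (Set.univ.pi fun _ : Fin n => Set.Icc (0 : ℝ) 1) with hKdef
  have hKcomp : IsCompact K :=
    (isCompact_univ_pi fun _ => isCompact_Icc).image
      (EuclideanSpace.equiv (Fin n) ℝ).symm.continuous
  have himg : Φ '' F = Φ '' (F ∩ K) := by
    apply Subset.antisymm
    · rintro _ ⟨x, hx, rfl⟩
      refine ⟨x + (show EuclideanSpace ℝ (Fin n) from WithLp.toLp 2 (fun i => ((-⌊x i⌋ : ℤ) : ℝ))),
        ⟨?_, ?_⟩, hper x (fun i => -⌊x i⌋)⟩
      · rw [hF] at hx ⊢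
        exact (hgper x (fun i => -⌊x i⌋)).trans hx
      · refine ⟨fun i => Int.fract (x i), fun i _ => ?_, ?_⟩
        · exact ⟨Int.fract_nonneg _, (Int.fract_lt_one _).le⟩
        · apply (EuclideanSpace.equiv (Fin n) ℝ).injective
          ext i
          simp [Int.fract, sub_eq_add_neg, PiLp.add_apply]
    · exact image_mono (f := Φ) (inter_subset_left)
  have hΦFclosed : IsClosed (Φ '' F) := by
    rw [himg]
    exact ((hKcomp.inter_left hFclosed).image hΦcont).isClosed
  have hopen : IsOpen {x | Φ x ∉ Φ '' F} :=
    hΦFclosed.isOpen_compl.preimage hΦcont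
  refine ⟨hopen, ?_⟩
  have hdense_g : ∀ U : Set (EuclideanSpace ℝ (Fin n)),
      IsOpen U → U.Nonempty → ∃ y ∈ U, g y ≠ 0 := by
    rintro U hU ⟨z, hz⟩
    by_contra h
    push_neg at h
    have hev : g =ᶠ[nhds z] 0 := by
      filter_upwards [hU.mem_nhds hz] with y hy
      exact h y hy
    have := hg.eqOn_zero_of_preconnected_of_eventuallyEq_zero
      isPreconnected_univ (mem_univ z) hev (mem_univ x₀)
    exact hx₀ this
  have hsard : volume (Φ '' F) = 0 := by
    apply addHaar_image_eq_zero_of_det_fderivWithin_eq_zero volume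
      (f' := fderiv ℝ Φ)
    · exact fun x _ => (hdiff x).hasFDerivAt.hasFDerivWithinAt
    · intro x hx
      rw [hF] at hx
      exact hx
  rw [dense_iff_inter_open]
  intro U hU hUne
  obtain ⟨y, hyU, hgy⟩ := hdense_g U hU hUne
  let e : EuclideanSpace ℝ (Fin n) ≃L[ℝ] EuclideanSpace ℝ (Fin n) :=
    (LinearMap.equivOfDetNeZero (fderiv ℝ Φ y).toLinearMap hgy).toContinuousLinearEquiv
  have hcoe : (e : EuclideanSpace ℝ (Fin n) →L[ℝ] EuclideanSpace ℝ (Fin n)) = fderiv ℝ Φ y := by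
    ext v
    rfl
  have hstrict : HasStrictFDerivAt Φ
      (e : EuclideanSpace ℝ (Fin n) →L[ℝ] EuclideanSpace ℝ (Fin n)) y := by
    rw [hcoe]
    exact (hΦ y (mem_univ y)).hasStrictFDerivAt
  have hmap : Filter.map Φ (nhds y) = nhds (Φ y) := hstrict.map_nhds_eq_of_equiv
  have hΦU : Φ '' U ∈ nhds (Φ y) := by
    rw [← hmap]
    exact Filter.image_mem_map (hU.mem_nhds hyU)
  have hpos : 0 < volume (Φ '' U) := Measure.measure_pos_of_mem_nhds volume hΦU
  have hnotsub : ¬ Φ '' U ⊆ Φ '' F := by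
    intro hsub
    exact absurd (le_antisymm ((measure_mono hsub).trans hsard.le) zero_le) hpos.ne'
  obtain ⟨v, hvU, hvF⟩ := not_subset.1 hnotsub
  obtain ⟨z, hzU, rfl⟩ := hvU
  exact ⟨z, hzU, hvF⟩
end
end

section
/- Let (a_k)_{k≥1} and (b_k)_{k≥1} be real sequences with Σ_{k≥1}|a_k| < ∞ and Σ_{k≥1}|b_k| < ∞, and define f(s) = Σ_{k≥1} a_k cos(2πks) and g(t) = Σ_{k≥1} b_k cos(2πkt). Then for all positive integers p, r, m and every α ∈ ℝ, ∫₀¹∫₀¹ f(s) g(t) cos²(πm(ps + rt) + α) ds dt = (1/8) a_{mp} b_{mr} cos(2α). -/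
open scoped Real
open MeasureTheory

private lemma contcos (c d : ℝ) : Continuous fun s : ℝ => Real.cos (c * s + d) :=
  Real.continuous_cos.comp ((continuous_const.mul continuous_id).add continuous_const)

private lemma contcos' (c : ℝ) : Continuous fun s : ℝ => Real.cos (c * s) :=
  Real.continuous_cos.comp (continuous_const.mul continuous_id)

private lemma cos_mul_cos' (A B : ℝ) :
    Real.cos A * Real.cos B = Real.cos (A + B) / 2 + Real.cos (A - B) / 2 := by
  rw [Real.cos_add, Real.cos_sub]; ring

private lemma cosper (j : ℤ) (hj : j ≠ 0) (d : ℝ) :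
    ∫ s in (0:ℝ)..1, Real.cos (2 * π * (j : ℝ) * s + d) = 0 := by
  have h2 : (2 * π * (j : ℝ)) ≠ 0 :=
    mul_ne_zero (mul_ne_zero two_ne_zero Real.pi_ne_zero) (Int.cast_ne_zero.2 hj)
  open intervalIntegral in
  rw [integral_comp_mul_add Real.cos h2 d, integral_cos]
  have h3 : 2 * π * (j : ℝ) * 1 + d = d + (j : ℝ) * (2 * π) := by ring
  have h4 : 2 * π * (j : ℝ) * 0 + d = d := by ring
  rw [h3, h4, Real.sin_add_int_mul_two_pi, sub_self, smul_zero]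

private lemma term_integral (k n : ℕ) (φ : ℝ) :
    ∫ s in (0:ℝ)..1, Real.cos (2 * π * ((k : ℝ) + 1) * s) * Real.cos (2 * π * (n : ℝ) * s + φ)
      = if k + 1 = n then Real.cos φ / 2 else 0 := by
  have prod : ∀ s : ℝ, Real.cos (2 * π * ((k : ℝ) + 1) * s) * Real.cos (2 * π * (n : ℝ) * s + φ)
      = Real.cos (2 * π * (((k : ℝ) + 1) + n) * s + φ) / 2
        + Real.cos (2 * π * (((k : ℝ) + 1) - n) * s + (-φ)) / 2 := by
    intro s
    have e1 : 2 * π * (((k : ℝ) + 1) + n) * s + φ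
        = (2 * π * ((k : ℝ) + 1) * s) + (2 * π * (n : ℝ) * s + φ) := by ring
    have e2 : 2 * π * (((k : ℝ) + 1) - n) * s + (-φ)
        = (2 * π * ((k : ℝ) + 1) * s) - (2 * π * (n : ℝ) * s + φ) := by ring
    rw [cos_mul_cos', e1, e2]
  simp_rw [prod]
  have hi1 : IntervalIntegrable (fun s => Real.cos (2 * π * (((k : ℝ) + 1) + n) * s + φ) / 2)
      MeasureTheory.volume 0 1 := (Continuous.div_const (contcos _ _) 2).intervalIntegrable 0 1
  have hi2 : IntervalIntegrable (fun s => Real.cos (2 * π * (((k : ℝ) + 1) - n) * s + (-φ)) / 2)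
      MeasureTheory.volume 0 1 := (Continuous.div_const (contcos _ _) 2).intervalIntegrable 0 1
  rw [intervalIntegral.integral_add hi1 hi2, intervalIntegral.integral_div,
    intervalIntegral.integral_div]
  have h1 : ∫ s in (0:ℝ)..1, Real.cos (2 * π * (((k : ℝ) + 1) + n) * s + φ) = 0 := by
    have := cosper ((k : ℤ) + 1 + n) (by positivity) φ
    have hc : ((((k : ℤ) + 1 + n) : ℤ) : ℝ) = ((k : ℝ) + 1) + n := by push_cast; ring
    rwa [hc] at this
  rw [h1]
  by_cases hkn : k + 1 = n
  · have hc : ((k : ℝ) + 1) - n = 0 := by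
      have : ((k : ℝ) + 1) = n := by exact_mod_cast congrArg (Nat.cast : ℕ → ℝ) hkn
      rw [this]; ring
    simp [hkn, hc, Real.cos_neg]
  · have h2 : ∫ s in (0:ℝ)..1, Real.cos (2 * π * (((k : ℝ) + 1) - n) * s + (-φ)) = 0 := by
      have hjne : ((k : ℤ) + 1 - n) ≠ 0 := by omega
      have := cosper ((k : ℤ) + 1 - n) hjne (-φ)
      have hc : ((((k : ℤ) + 1 - n) : ℤ) : ℝ) = ((k : ℝ) + 1) - n := by push_cast; ring
      rwa [hc] at this
    simp [hkn, h2]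

private lemma interchange (c : ℕ → ℝ) (hc : Summable fun k : ℕ => |c (k + 1)|)
    (G : ℝ → ℝ) (hG : Continuous G) (hGb : ∀ s, |G s| ≤ 1) :
    ∫ s in (0:ℝ)..1, (∑' k : ℕ, c (k + 1) * Real.cos (2 * π * ((k : ℝ) + 1) * s)) * G s
      = ∑' k : ℕ, c (k + 1) * ∫ s in (0:ℝ)..1, Real.cos (2 * π * ((k : ℝ) + 1) * s) * G s := by
  have hcont : ∀ k : ℕ, Continuous fun s : ℝ =>
      c (k + 1) * Real.cos (2 * π * ((k : ℝ) + 1) * s) * G s := by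
    intro k; exact (continuous_const.mul (contcos' _)).mul hG
  have hint : ∀ k : ℕ, MeasureTheory.Integrable
      (fun s : ℝ => c (k + 1) * Real.cos (2 * π * ((k : ℝ) + 1) * s) * G s)
      (MeasureTheory.volume.restrict (Set.Ioc (0:ℝ) 1)) := by
    intro k
    exact (intervalIntegrable_iff_integrableOn_Ioc_of_le zero_le_one).mp
      ((hcont k).intervalIntegrable 0 1)
  have hbd : ∀ k : ℕ, ∀ s : ℝ,
      ‖c (k + 1) * Real.cos (2 * π * ((k : ℝ) + 1) * s) * G s‖ ≤ |c (k + 1)| := by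
    intro k s
    rw [Real.norm_eq_abs, abs_mul, abs_mul]
    have h1 := Real.abs_cos_le_one (2 * π * ((k : ℝ) + 1) * s)
    have h2 := hGb s
    have h3 := abs_nonneg (c (k+1))
    have h4 := abs_nonneg (Real.cos (2 * π * ((k : ℝ) + 1) * s))
    have h5 := abs_nonneg (G s)
    calc |c (k + 1)| * |Real.cos (2 * π * ((k : ℝ) + 1) * s)| * |G s|
        ≤ |c (k + 1)| * 1 * 1 :=
          mul_le_mul (mul_le_mul le_rfl h1 h4 h3) h2 h5 (by positivity)
      _ = |c (k + 1)| := by ring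
  have hsum : Summable fun k : ℕ =>
      ∫ s in Set.Ioc (0:ℝ) 1, ‖c (k + 1) * Real.cos (2 * π * ((k : ℝ) + 1) * s) * G s‖ := by
    apply hc.of_nonneg_of_le
    · intro k; exact MeasureTheory.integral_nonneg fun s => norm_nonneg _
    · intro k
      calc ∫ s in Set.Ioc (0:ℝ) 1, ‖c (k + 1) * Real.cos (2 * π * ((k : ℝ) + 1) * s) * G s‖
          ≤ ∫ _s in Set.Ioc (0:ℝ) 1, |c (k + 1)| := by
            apply MeasureTheory.integral_mono ((hint k).norm)
              (MeasureTheory.integrableOn_const (by simp) (by simp))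
            exact fun s => hbd k s
        _ = |c (k + 1)| := by simp [Real.volume_Ioc]
  rw [intervalIntegral.integral_of_le zero_le_one]
  have hrw : ∀ s : ℝ,
      (∑' k : ℕ, c (k + 1) * Real.cos (2 * π * ((k : ℝ) + 1) * s)) * G s
      = ∑' k : ℕ, c (k + 1) * Real.cos (2 * π * ((k : ℝ) + 1) * s) * G s := by
    intro s; exact (tsum_mul_right).symm
  simp_rw [hrw]
  rw [← MeasureTheory.integral_tsum_of_summable_integral_norm hint hsum]
  refine tsum_congr fun k => ?_
  rw [← intervalIntegral.integral_of_le zero_le_one]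
  simp_rw [mul_assoc]
  exact intervalIntegral.integral_const_mul _ _

private lemma key (c : ℕ → ℝ) (hc : Summable fun k : ℕ => |c (k + 1)|)
    (n : ℕ) (hn : n ≠ 0) (φ : ℝ) :
    ∫ s in (0:ℝ)..1, (∑' k : ℕ, c (k + 1) * Real.cos (2 * π * ((k : ℝ) + 1) * s))
        * Real.cos (2 * π * (n : ℝ) * s + φ)
      = c n / 2 * Real.cos φ := by
  rw [interchange c hc _ (contcos _ _) (fun s => Real.abs_cos_le_one _)]
  simp_rw [term_integral]
  rw [tsum_eq_single (n - 1)]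
  · have : (n - 1) + 1 = n := by omega
    rw [this, if_pos rfl]; ring
  · intro k hk
    have : ¬ (k + 1 = n) := by omega
    rw [if_neg this, mul_zero]

private lemma key0 (c : ℕ → ℝ) (hc : Summable fun k : ℕ => |c (k + 1)|) :
    ∫ s in (0:ℝ)..1, (∑' k : ℕ, c (k + 1) * Real.cos (2 * π * ((k : ℝ) + 1) * s)) = 0 := by
  have h := interchange c hc (fun _ => 1) continuous_const (fun s => by simp)
  simp only [mul_one] at h
  rw [h]
  have hterm : ∀ k : ℕ, ∫ s in (0:ℝ)..1, Real.cos (2 * π * ((k : ℝ) + 1) * s) = 0 := by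
    intro k
    have := cosper ((k : ℤ) + 1) (by positivity) 0
    have hc2 : ∀ s : ℝ, 2 * π * ((((k : ℤ) + 1) : ℤ) : ℝ) * s + 0
        = 2 * π * ((k : ℝ) + 1) * s := by intro s; push_cast; ring
    simp_rw [hc2] at this
    exact this
  simp [hterm]

/-- Let (a_k)_{k≥1}, (b_k)_{k≥1} be absolutely summable real sequences and
f(s) = Σ_{k≥1} a_k cos(2πks), g(t) = Σ_{k≥1} b_k cos(2πkt). Then for all positive integers
p, r, m and every α ∈ ℝ,
∫₀¹∫₀¹ f(s) g(t) cos²(πm(ps + rt) + α) ds dt = (1/8) a_{mp} b_{mr} cos(2α). -/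
theorem invariant_leading_order (a b : ℕ → ℝ)
    (ha : Summable fun k : ℕ => |a (k + 1)|)
    (hb : Summable fun k : ℕ => |b (k + 1)|)
    (f g : ℝ → ℝ)
    (hf : ∀ s : ℝ, f s = ∑' k : ℕ, a (k + 1) * Real.cos (2 * π * (k + 1 : ℝ) * s))
    (hg : ∀ t : ℝ, g t = ∑' k : ℕ, b (k + 1) * Real.cos (2 * π * (k + 1 : ℝ) * t))
    (p r m : ℕ) (hp : 0 < p) (hr : 0 < r) (hm : 0 < m) (α : ℝ) :
    (∫ t in (0:ℝ)..1, ∫ s in (0:ℝ)..1,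
        f s * g t * Real.cos (π * (m : ℝ) * ((p : ℝ) * s + (r : ℝ) * t) + α) ^ 2) =
      (1 / 8) * a (m * p) * b (m * r) * Real.cos (2 * α) := by
  have hfc : Continuous f := by
    rw [funext hf]
    exact continuous_tsum (fun k => continuous_const.mul (contcos' _)) ha
      (fun k s => by
        rw [Real.norm_eq_abs, abs_mul]
        have h1 := Real.abs_cos_le_one (2 * π * ((k:ℝ) + 1) * s)
        have h3 := abs_nonneg (a (k+1))
        calc |a (k+1)| * |Real.cos (2 * π * ((k:ℝ) + 1) * s)| ≤ |a (k+1)| * 1 :=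
              mul_le_mul le_rfl h1 (abs_nonneg _) h3
          _ = |a (k+1)| := mul_one _)
  have inner : ∀ t : ℝ, (∫ s in (0:ℝ)..1,
      f s * g t * Real.cos (π * (m : ℝ) * ((p : ℝ) * s + (r : ℝ) * t) + α) ^ 2)
      = g t * (a (m * p) / 4 * Real.cos (2 * π * ((m * r : ℕ) : ℝ) * t + 2 * α)) := by
    intro t
    have step1 : (∫ s in (0:ℝ)..1,
        f s * g t * Real.cos (π * (m : ℝ) * ((p : ℝ) * s + (r : ℝ) * t) + α) ^ 2)
        = g t * ∫ s in (0:ℝ)..1,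
            (1/2) * f s + (1/2) * (f s * Real.cos (2 * π * ((m * p : ℕ) : ℝ) * s
              + (2 * π * ((m * r : ℕ) : ℝ) * t + 2 * α))) := by
      rw [← intervalIntegral.integral_const_mul]
      apply intervalIntegral.integral_congr
      intro s _
      simp only [Real.cos_sq]
      have h2 : 2 * (π * (m : ℝ) * ((p : ℝ) * s + (r : ℝ) * t) + α)
          = 2 * π * ((m * p : ℕ) : ℝ) * s + (2 * π * ((m * r : ℕ) : ℝ) * t + 2 * α) := by
        push_cast; ring
      rw [h2]; ring
    rw [step1]
    have hint1 : IntervalIntegrable (fun s => (1/2) * f s) MeasureTheory.volume 0 1 :=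
      (continuous_const.mul hfc).intervalIntegrable 0 1
    have hint2 : IntervalIntegrable (fun s => (1/2) * (f s * Real.cos (2 * π * ((m * p : ℕ) : ℝ) * s
        + (2 * π * ((m * r : ℕ) : ℝ) * t + 2 * α)))) MeasureTheory.volume 0 1 :=
      (continuous_const.mul (hfc.mul (contcos _ _))).intervalIntegrable 0 1
    rw [intervalIntegral.integral_add hint1 hint2, intervalIntegral.integral_const_mul,
      intervalIntegral.integral_const_mul]
    have hf0 : (∫ s in (0:ℝ)..1, f s) = 0 := by
      rw [intervalIntegral.integral_congr (g := fun s =>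
        ∑' k : ℕ, a (k + 1) * Real.cos (2 * π * ((k : ℝ) + 1) * s)) (fun s _ => hf s)]
      exact key0 a ha
    have hf1 : (∫ s in (0:ℝ)..1, f s * Real.cos (2 * π * ((m * p : ℕ) : ℝ) * s
        + (2 * π * ((m * r : ℕ) : ℝ) * t + 2 * α)))
        = a (m * p) / 2 * Real.cos (2 * π * ((m * r : ℕ) : ℝ) * t + 2 * α) := by
      rw [intervalIntegral.integral_congr (g := fun s =>
        (∑' k : ℕ, a (k + 1) * Real.cos (2 * π * ((k : ℝ) + 1) * s))
          * Real.cos (2 * π * ((m * p : ℕ) : ℝ) * s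
            + (2 * π * ((m * r : ℕ) : ℝ) * t + 2 * α))) (fun s _ => by simp only [hf])]
      exact key a ha (m * p) (by positivity) _
    rw [hf0, hf1]
    ring
  rw [intervalIntegral.integral_congr (fun t _ => inner t)]
  have houter : (∫ t in (0:ℝ)..1,
      g t * (a (m * p) / 4 * Real.cos (2 * π * ((m * r : ℕ) : ℝ) * t + 2 * α)))
      = a (m * p) / 4 * ((∫ t in (0:ℝ)..1,
          g t * Real.cos (2 * π * ((m * r : ℕ) : ℝ) * t + 2 * α))) := by
    rw [← intervalIntegral.integral_const_mul]
    apply intervalIntegral.integral_congr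
    intro t _
    ring
  rw [houter]
  have hg1 : (∫ t in (0:ℝ)..1, g t * Real.cos (2 * π * ((m * r : ℕ) : ℝ) * t + 2 * α))
      = b (m * r) / 2 * Real.cos (2 * α) := by
    rw [intervalIntegral.integral_congr (g := fun t =>
      (∑' k : ℕ, b (k + 1) * Real.cos (2 * π * ((k : ℝ) + 1) * t))
        * Real.cos (2 * π * ((m * r : ℕ) : ℝ) * t + 2 * α)) (fun t _ => by simp only [hg])]
    exact key b hb (m * r) (by positivity) _
  rw [hg1]
  ring
end
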